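/- Structure at the bottom of an optimal parity circuit: let n ≥ 2 and let C be a minimum-size DeMorgan circuit computing XOR_n. Fix a topological order of the gates of C and let h be the first binary (∧/∨) gate in this order. Then (i) the two inputs of h are, up to negations, two distinct input variables x_i and x_j with i ≠ j, and (ii) each of x_i and x_j is read, possibly through negations, by at least two distinct binary gates of C. -/

import Mathlib

/-- A node (gate) of a DeMorgan circuit on `n` inputs: an input variable, a constant,
a negation of an earlier node, or a binary ∧/∨ of two earlier (ordered) nodes.
Nodes are referenced by their position in the gate list. -/
inductive Gate (n : ℕ) : Type
  | inp : Fin n → Gate n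
  | const : Bool → Gate n
  | not : ℕ → Gate n
  | and : ℕ → ℕ → Gate n
  | or : ℕ → ℕ → Gate n
deriving DecidableEq

/-- The (indices of the) nodes a gate reads from. -/
def Gate.refs {n : ℕ} : Gate n → List ℕ
  | .inp _ => []
  | .const _ => []
  | .not a => [a]
  | .and a b => [a, b]
  | .or a b => [a, b]

/-- A DeMorgan circuit on `n` inputs: a finite DAG of gates, presented as a list in
topological order (every gate only reads strictly earlier gates), with a designated
output node. -/
structure Circuit (n : ℕ) : Type where
  gates : List (Gate n)
  output : Fin gates.length
  wf : ∀ (i : ℕ) (g : Gate n), gates[i]? = some g → ∀ r ∈ g.refs, r < i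

/-- Value of a single gate, given the values `acc` of all earlier gates. -/
def Gate.val {n : ℕ} (x : Fin n → Bool) (acc : List Bool) : Gate n → Bool
  | .inp i => x i
  | .const b => b
  | .not a => !(acc.getD a false)
  | .and a b => acc.getD a false && acc.getD b false
  | .or a b => acc.getD a false || acc.getD b false

/-- The list of values of all gates of the circuit, in topological order. -/
def Circuit.evalList {n : ℕ} (C : Circuit n) (x : Fin n → Bool) : List Bool :=
  C.gates.foldl (fun acc g => acc ++ [g.val x acc]) []

/-- The Boolean value computed by the circuit: the value of its output node. -/
def Circuit.eval {n : ℕ} (C : Circuit n) (x : Fin n → Bool) : Bool :=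
  (C.evalList x).getD C.output false

/-- A gate is costly when it is a binary (∧/∨) gate; ¬ gates and constants are free. -/
def Gate.costly {n : ℕ} : Gate n → Bool
  | .and _ _ => true
  | .or _ _ => true
  | _ => false

/-- The size of a circuit: its number of binary (∧/∨) gates. -/
def Circuit.size {n : ℕ} (C : Circuit n) : ℕ := (C.gates.filter Gate.costly).length

/-- `C` computes the Boolean function `f`. -/
def Circuit.Computes {n : ℕ} (C : Circuit n) (f : (Fin n → Bool) → Bool) : Prop :=
  ∀ x, C.eval x = f x

/-- The DeMorgan circuit complexity of `f`: the minimum number of binary gates of a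
DeMorgan circuit computing `f`. -/
noncomputable def CC (n : ℕ) (f : (Fin n → Bool) → Bool) : ℕ :=
  sInf {s | ∃ C : Circuit n, C.Computes f ∧ C.size = s}

/-- The parity function `XOR_n(x) = (x_1 + ⋯ + x_n) mod 2`. -/
def XORf (n : ℕ) (x : Fin n → Bool) : Bool :=
  decide ((∑ i : Fin n, (if x i then 1 else 0)) % 2 = 1)

/-- `UpToNeg C a i`: node `a` of circuit `C` is, through a (possibly empty) chain of
¬ gates, the input variable `x_i`. -/
inductive UpToNeg {n : ℕ} (C : Circuit n) : ℕ → Fin n → Prop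
  | base {a : ℕ} {i : Fin n} : C.gates[a]? = some (.inp i) → UpToNeg C a i
  | neg {a a' : ℕ} {i : Fin n} :
      C.gates[a]? = some (.not a') → UpToNeg C a' i → UpToNeg C a i

/-- `ReadsVar C g i`: node `g` is a binary (∧/∨) gate of `C` one of whose inputs is,
possibly through negations, the variable `x_i`. -/
def ReadsVar {n : ℕ} (C : Circuit n) (g : ℕ) (i : Fin n) : Prop :=
  ∃ a b : ℕ,
    (C.gates[g]? = some (.and a b) ∨ C.gates[g]? = some (.or a b)) ∧
    (UpToNeg C a i ∨ UpToNeg C b i)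

/-! Replacing a binary gate by a free gate (a constant or a copy of an earlier free node) that
computes the same function makes a circuit smaller. In a minimum circuit the inputs of the first
binary gate are literals or constants, so that gate must combine literals of two distinct
variables `x_i`, `x_j`. If `x_i` were read by no other binary gate, fixing `x_j` to the value
that forces this gate makes every node either a literal of `x_i` or independent of `x_i`; since
parity depends on both `x_i` and `x_j`, neither can hold at the output. -/

def IsAndOr (op : Bool → Bool → Bool) : Prop :=
  op = (· && ·) ∨ op = (· || ·)

namespace IsAndOr

variable {op : Bool → Bool → Bool}

theorem comm (hop : IsAndOr op) (y z : Bool) : op y z = op z y := by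
  rcases hop with rfl | rfl <;> cases y <;> cases z <;> rfl

theorem idem (hop : IsAndOr op) (y : Bool) : op y y = y := by
  rcases hop with rfl | rfl <;> cases y <;> rfl

theorem const_or_id (hop : IsAndOr op) (c : Bool) : (∀ y, op c y = c) ∨ ∀ y, op c y = y := by
  rcases hop with rfl | rfl <;> cases c <;> simp

theorem exists_absorbing (hop : IsAndOr op) : ∃ c, ∀ y, op c y = c := by
  rcases hop with rfl | rfl
  exacts [⟨false, by simp⟩, ⟨true, by simp⟩]

theorem exists_apply_self_not (hop : IsAndOr op) : ∃ d, ∀ y, op y (!y) = d := by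
  rcases hop with rfl | rfl
  exacts [⟨false, by simp⟩, ⟨true, by simp⟩]

end IsAndOr

section Parity

variable {n : ℕ}

theorem XORf_update_not (x : Fin n → Bool) (i : Fin n) :
    XORf n (Function.update x i (!x i)) = !XORf n x := by
  have hsplit : ∀ y : Fin n → Bool, (∑ k, if y k then 1 else 0) =
      (if y i then 1 else 0) + ∑ k ∈ Finset.univ.erase i, if y k then 1 else 0 :=
    fun y => (Finset.add_sum_erase _ _ (Finset.mem_univ i)).symm
  have hrest : ∑ k ∈ Finset.univ.erase i, (if Function.update x i (!x i) k then 1 else 0) =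
      ∑ k ∈ Finset.univ.erase i, if x k then 1 else 0 :=
    Finset.sum_congr rfl fun k hk => by rw [Function.update_of_ne (Finset.ne_of_mem_erase hk)]
  unfold XORf
  rw [hsplit, hsplit x, hrest, Function.update_self, Bool.eq_iff_iff]
  cases x i <;> simp <;> omega

theorem not_dependsOn_XORf {s : Set (Fin n)} {i : Fin n} (hi : i ∉ s) :
    ¬ DependsOn (XORf n) s := fun hdep => by
  let x : Fin n → Bool := fun _ => false
  have hflip := XORf_update_not x i
  rw [← hdep (x := x) fun k hk => (Function.update_of_ne (ne_of_mem_of_not_mem hk hi) _ _).symm]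
    at hflip
  exact Bool.not_ne_self _ hflip.symm

end Parity

namespace Gate

variable {n : ℕ}

theorem val_congr (x : Fin n → Bool) {L L' : List Bool} (g : Gate n)
    (h : ∀ r ∈ g.refs, L.getD r false = L'.getD r false) : g.val x L = g.val x L' := by
  cases g <;> simp_all [Gate.val, Gate.refs]

def evalAll (x : Fin n → Bool) (gs : List (Gate n)) : List Bool :=
  gs.foldl (fun acc g => acc ++ [g.val x acc]) []

def TopoSorted (gs : List (Gate n)) : Prop :=
  ∀ (k : ℕ) (g : Gate n), gs[k]? = some g → ∀ r ∈ g.refs, r < k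

theorem evalAll_append_singleton (x : Fin n → Bool) (gs : List (Gate n)) (g : Gate n) :
    evalAll x (gs ++ [g]) = evalAll x gs ++ [g.val x (evalAll x gs)] := by
  simp [evalAll, List.foldl_append]

theorem length_evalAll (x : Fin n → Bool) (gs : List (Gate n)) :
    (evalAll x gs).length = gs.length := by
  induction gs using List.reverseRecOn with
  | nil => rfl
  | append_singleton gs g ih => simp [evalAll_append_singleton, ih]

theorem getElem?_evalAll (x : Fin n → Bool) {gs : List (Gate n)} (hgs : TopoSorted gs)
    {k : ℕ} {g : Gate n} (hk : gs[k]? = some g) :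
    (evalAll x gs)[k]? = some (g.val x (evalAll x gs)) := by
  induction gs using List.reverseRecOn generalizing k g with
  | nil => simp at hk
  | append_singleton gs g' ih =>
    set L := evalAll x gs
    have hlen : L.length = gs.length := length_evalAll x gs
    have hext : ∀ g'' : Gate n, (∀ r ∈ g''.refs, r < gs.length) →
        g''.val x (L ++ [g'.val x L]) = g''.val x L := fun g'' hr =>
      val_congr x g'' fun r hr' => by
        simp only [List.getD_eq_getElem?_getD, List.getElem?_append_left (hlen ▸ hr r hr')]
    rw [evalAll_append_singleton]
    rcases lt_or_ge k gs.length with hlt | hge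
    · rw [List.getElem?_append_left hlt] at hk
      have hgs' : TopoSorted gs := fun k' g'' hk' =>
        hgs k' g'' (by rwa [List.getElem?_append_left (List.getElem?_eq_some_iff.1 hk').1])
      rw [List.getElem?_append_left (hlen ▸ hlt), ih hgs' hk,
        hext g fun r hr => (hgs k g (by rwa [List.getElem?_append_left hlt]) r hr).trans hlt]
    · obtain rfl : k = gs.length := by
        have := (List.getElem?_eq_some_iff.1 hk).1
        simp at this; omega
      obtain rfl : g' = g := by simpa using hk
      rw [← hlen, List.getElem?_concat_length, hext g' fun r hr => hgs _ g' hk r hr]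

end Gate

namespace Circuit

variable {n : ℕ} (C : Circuit n)

theorem length_evalList (x : Fin n → Bool) : (C.evalList x).length = C.gates.length :=
  Gate.length_evalAll x C.gates

theorem getElem?_evalList (x : Fin n → Bool) {k : ℕ} {g : Gate n} (hk : C.gates[k]? = some g) :
    (C.evalList x)[k]? = some (g.val x (C.evalList x)) :=
  Gate.getElem?_evalAll x C.wf hk

theorem eq_evalList_of_fixedPoint (x : Fin n → Bool) {L : List Bool}
    (hlen : L.length = C.gates.length)
    (hL : ∀ (k : ℕ) (g : Gate n), C.gates[k]? = some g → L[k]? = some (g.val x L)) :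
    L = C.evalList x := by
  apply List.ext_getElem?
  intro k
  induction k using Nat.strong_induction_on with
  | _ k ih =>
    cases hk : C.gates[k]? with
    | none =>
      rw [List.getElem?_eq_none_iff] at hk
      rw [List.getElem?_eq_none (by omega),
        List.getElem?_eq_none (by simp [length_evalList]; omega)]
    | some g =>
      rw [hL k g hk, C.getElem?_evalList x hk]
      exact congrArg some <| Gate.val_congr x g fun r hr => by
        simp only [List.getD_eq_getElem?_getD, ih r (C.wf k g hk r hr)]

/-- `false` past the last gate. -/
def nodeVal (x : Fin n → Bool) (k : ℕ) : Bool :=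
  (C.evalList x).getD k false

variable {C}

theorem nodeVal_of_getElem? (x : Fin n → Bool) {k : ℕ} {g : Gate n}
    (hk : C.gates[k]? = some g) : C.nodeVal x k = g.val x (C.evalList x) := by
  simp [nodeVal, List.getD_eq_getElem?_getD, C.getElem?_evalList x hk]

theorem nodeVal_of_length_le (x : Fin n → Bool) {k : ℕ} (hk : C.gates.length ≤ k) :
    C.nodeVal x k = false := by
  simp [nodeVal, List.getD_eq_getElem?_getD, length_evalList, hk]

theorem getElem?_evalList_eq_nodeVal (x : Fin n → Bool) {k : ℕ} (hk : k < C.gates.length) :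
    (C.evalList x)[k]? = some (C.nodeVal x k) := by
  simp [nodeVal, List.getD_eq_getElem?_getD, length_evalList, hk]

theorem eval_eq_nodeVal (x : Fin n → Bool) : C.eval x = C.nodeVal x C.output := rfl

def setGate (C : Circuit n) (h : ℕ) (g : Gate n) (hg : ∀ r ∈ g.refs, r < h) : Circuit n where
  gates := C.gates.set h g
  output := C.output.cast (List.length_set ..).symm
  wf k g' hk := by
    rw [List.getElem?_set] at hk
    split_ifs at hk with hhk
    · obtain rfl := Option.some_inj.1 hk
      exact hhk ▸ hg
    · exact C.wf k g' hk

theorem evalList_setGate {h : ℕ} (hh : h < C.gates.length) {g : Gate n}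
    (hg : ∀ r ∈ g.refs, r < h) (hval : ∀ x, g.val x (C.evalList x) = C.nodeVal x h)
    (x : Fin n → Bool) : (C.setGate h g hg).evalList x = C.evalList x := by
  refine ((C.setGate h g hg).eq_evalList_of_fixedPoint x ?_ fun k g' hk => ?_).symm
  · simp [setGate, length_evalList]
  · simp only [setGate, List.getElem?_set] at hk
    split_ifs at hk with hhk
    · obtain rfl := Option.some_inj.1 hk
      rw [← hhk, getElem?_evalList_eq_nodeVal x hh, hval]
    · exact C.getElem?_evalList x hk

theorem size_setGate_lt {h : ℕ} {g₀ : Gate n} (hh : C.gates[h]? = some g₀)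
    (hcost : g₀.costly = true) {g : Gate n} (hg : ∀ r ∈ g.refs, r < h) (hfree : g.costly = false) :
    (C.setGate h g hg).size < C.size := by
  obtain ⟨hlt, rfl⟩ := List.getElem?_eq_some_iff.1 hh
  have hpos := List.boole_getElem_le_countP (p := Gate.costly) hlt
  simp only [size, setGate, ← List.countP_eq_length_filter, List.countP_set hlt, hcost, hfree,
    if_true, Bool.false_eq_true, if_false] at hpos ⊢
  omega

def IsMinimal (C : Circuit n) (f : (Fin n → Bool) → Bool) : Prop :=
  C.Computes f ∧ ∀ C' : Circuit n, C'.Computes f → C.size ≤ C'.size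

theorem IsMinimal.false_of_free_replacement {f : (Fin n → Bool) → Bool} (hC : C.IsMinimal f)
    {h : ℕ} {g₀ : Gate n} (hh : C.gates[h]? = some g₀) (hcost : g₀.costly = true)
    {g : Gate n} (hg : ∀ r ∈ g.refs, r < h) (hfree : g.costly = false)
    (hval : ∀ x, g.val x (C.evalList x) = C.nodeVal x h) : False := by
  have hh' : h < C.gates.length := (List.getElem?_eq_some_iff.1 hh).1
  have hcomp : (C.setGate h g hg).Computes f := fun x => by
    rw [← hC.1 x]
    exact congrArg (List.getD · _ false) (evalList_setGate hh' hg hval x)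
  exact (hC.2 _ hcomp).not_gt (size_setGate_lt hh hcost hg hfree)

def IsBinaryGate (C : Circuit n) (h a b : ℕ) : Prop :=
  C.gates[h]? = some (.and a b) ∨ C.gates[h]? = some (.or a b)

def NoBinaryBelow (C : Circuit n) (h : ℕ) : Prop :=
  ∀ (k : ℕ) (g : Gate n), k < h → C.gates[k]? = some g → g.costly = false

theorem exists_isBinaryGate_of_costly {k : ℕ} {g : Gate n} (hk : C.gates[k]? = some g)
    (hcost : g.costly = true) : ∃ a b, C.IsBinaryGate k a b := by
  cases g <;> simp_all [Gate.costly, IsBinaryGate]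

namespace IsBinaryGate

variable {h a b : ℕ}

theorem exists_costly (hab : C.IsBinaryGate h a b) :
    ∃ g, C.gates[h]? = some g ∧ g.costly = true := by
  rcases hab with hh | hh
  exacts [⟨_, hh, rfl⟩, ⟨_, hh, rfl⟩]

theorem lt (hab : C.IsBinaryGate h a b) : a < h ∧ b < h := by
  rcases hab with hh | hh <;>
    exact ⟨C.wf _ _ hh a (by simp [Gate.refs]), C.wf _ _ hh b (by simp [Gate.refs])⟩

theorem nodeVal_eq (hab : C.IsBinaryGate h a b) :
    ∃ op, IsAndOr op ∧ ∀ x, C.nodeVal x h = op (C.nodeVal x a) (C.nodeVal x b) := by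
  rcases hab with hh | hh
  exacts [⟨_, .inl rfl, fun x => nodeVal_of_getElem? x hh⟩,
    ⟨_, .inr rfl, fun x => nodeVal_of_getElem? x hh⟩]

end IsBinaryGate

end Circuit

namespace UpToNeg

variable {n : ℕ} {C : Circuit n} {a : ℕ} {i : Fin n}

theorem exists_nodeVal_eq_xor (hu : UpToNeg C a i) : ∃ c, ∀ x, C.nodeVal x a = (x i ^^ c) := by
  induction hu with
  | base hk => exact ⟨false, fun x => by simp [Circuit.nodeVal_of_getElem? x hk, Gate.val]⟩
  | neg hk _ ih =>
    obtain ⟨c, hc⟩ := ih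
    refine ⟨!c, fun x => ?_⟩
    rw [Circuit.nodeVal_of_getElem? x hk]
    change (!C.nodeVal x _) = _
    rw [hc]
    simp

theorem dependsOn (hu : UpToNeg C a i) : DependsOn (C.nodeVal · a) {i} := fun x y hxy => by
  obtain ⟨c, hc⟩ := hu.exists_nodeVal_eq_xor
  simp only [hc, hxy i rfl]

end UpToNeg

theorem ReadsVar.exists_forcing {n : ℕ} {C : Circuit n} {h : ℕ} {j : Fin n} (hr : ReadsVar C h j) :
    ∃ v c, ∀ x : Fin n → Bool, x j = v → C.nodeVal x h = c := by
  obtain ⟨a, b, hab, hin⟩ := hr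
  obtain ⟨op, hop, hval⟩ := Circuit.IsBinaryGate.nodeVal_eq hab
  obtain ⟨c, hc⟩ := hop.exists_absorbing
  rcases hin with hu | hu <;> obtain ⟨p, hp⟩ := hu.exists_nodeVal_eq_xor
  · exact ⟨c ^^ p, c, fun x hx => by simp [hval, hp, hx, hc]⟩
  · exact ⟨c ^^ p, c, fun x hx => by simp [hval, hp, hx, hop.comm _ c, hc]⟩

namespace Circuit

variable {n : ℕ} {C : Circuit n}

theorem NoBinaryBelow.upToNeg_or_const {h : ℕ} (hfree : C.NoBinaryBelow h) {k : ℕ} (hk : k < h) :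
    (∃ i, UpToNeg C k i) ∨ ∃ c, ∀ x, C.nodeVal x k = c := by
  induction k using Nat.strong_induction_on with
  | _ k ih =>
  cases hg : C.gates[k]? with
  | none => exact .inr ⟨false, fun x => nodeVal_of_length_le x (by simpa using hg)⟩
  | some g =>
    cases g with
    | inp i => exact .inl ⟨i, .base hg⟩
    | const c => exact .inr ⟨c, fun x => nodeVal_of_getElem? x hg⟩
    | not a =>
      have ha := C.wf k _ hg a (by simp [Gate.refs])
      rcases ih a ha (ha.trans hk) with ⟨i, hi⟩ | ⟨c, hc⟩
      · exact .inl ⟨i, .neg hg hi⟩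
      · exact .inr ⟨!c, fun x => by rw [nodeVal_of_getElem? x hg]; exact congrArg (!·) (hc x)⟩
    | and a b | or a b => exact absurd (hfree k _ hk hg) (by simp [Gate.costly])

variable {f : (Fin n → Bool) → Bool}

theorem IsMinimal.not_nodeVal_const (hC : C.IsMinimal f) {h : ℕ} {g₀ : Gate n}
    (hh : C.gates[h]? = some g₀) (hcost : g₀.costly = true) (c : Bool) :
    ¬ ∀ x, C.nodeVal x h = c := fun hc =>
  hC.false_of_free_replacement hh hcost (g := .const c) (by simp [Gate.refs]) rfl
    fun x => (hc x).symm

theorem IsMinimal.not_nodeVal_eq_of_noBinaryBelow (hC : C.IsMinimal f) {h : ℕ} {g₀ : Gate n}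
    (hh : C.gates[h]? = some g₀) (hcost : g₀.costly = true) (hfree : C.NoBinaryBelow h)
    {m : ℕ} (hm : m < h) : ¬ ∀ x, C.nodeVal x h = C.nodeVal x m := fun hval => by
  cases hg : C.gates[m]? with
  | none =>
    exact hC.not_nodeVal_const hh hcost false fun x =>
      (hval x).trans (nodeVal_of_length_le x (by simpa using hg))
  | some g =>
    exact hC.false_of_free_replacement hh hcost (fun r hr => (C.wf m g hg r hr).trans hm)
      (hfree m g hm hg) fun x => by rw [hval, nodeVal_of_getElem? x hg]

/-- Otherwise the gate is constant or a copy of an earlier free node, and can be removed. -/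
theorem IsMinimal.exists_upToNeg_inputs (hC : C.IsMinimal f) {h a b : ℕ}
    (hab : C.IsBinaryGate h a b) (hfree : C.NoBinaryBelow h) :
    ∃ i j, UpToNeg C a i ∧ UpToNeg C b j ∧ i ≠ j := by
  obtain ⟨g₀, hh, hcost⟩ := hab.exists_costly
  obtain ⟨ha, hb⟩ := hab.lt
  obtain ⟨op, hop, hval⟩ := hab.nodeVal_eq
  have hconst := hC.not_nodeVal_const hh hcost
  have hna := hC.not_nodeVal_eq_of_noBinaryBelow hh hcost hfree ha
  have hnb := hC.not_nodeVal_eq_of_noBinaryBelow hh hcost hfree hb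
  have hvar : ∀ {m m' : ℕ}, m < h → (¬ ∀ x, C.nodeVal x h = C.nodeVal x m') →
      (∀ x, C.nodeVal x h = op (C.nodeVal x m) (C.nodeVal x m')) → ∃ i, UpToNeg C m i := by
    intro m m' hm hne hv
    refine (hfree.upToNeg_or_const hm).resolve_right ?_
    rintro ⟨c, hc⟩
    rcases hop.const_or_id c with hc' | hc'
    · exact hconst c fun x => by rw [hv, hc, hc']
    · exact hne fun x => by rw [hv, hc, hc']
  obtain ⟨i, hai⟩ := hvar ha hnb hval
  obtain ⟨j, hbj⟩ := hvar hb hna fun x => (hval x).trans (hop.comm _ _)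
  refine ⟨i, j, hai, hbj, ?_⟩
  rintro rfl
  obtain ⟨pa, hpa⟩ := hai.exists_nodeVal_eq_xor
  obtain ⟨pb, hpb⟩ := hbj.exists_nodeVal_eq_xor
  by_cases hp : pb = pa
  · exact hna fun x => by rw [hval, hpb, hp, ← hpa, hop.idem]
  · obtain ⟨d, hd⟩ := hop.exists_apply_self_not
    have hnot : ∀ x : Fin n → Bool, C.nodeVal x b = !C.nodeVal x a := fun x => by
      rw [hpa, hpb]; cases pa <;> cases pb <;> simp_all
    exact hconst d fun x => by rw [hval, hnot, hd]

theorem Computes.dependsOn_of_upToNeg {f : (Fin n → Bool) → Bool} (hC : C.Computes f) {i : Fin n}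
    (hu : UpToNeg C C.output i) : DependsOn f {i} :=
  (funext hC : (C.nodeVal · C.output) = f) ▸ hu.dependsOn

/-- Without binary gates the output is a literal or a constant. -/
theorem exists_costly_of_computes_XORf (hn : 2 ≤ n) (hC : C.Computes (XORf n)) :
    ∃ (k : ℕ) (g : Gate n), C.gates[k]? = some g ∧ g.costly = true := by
  by_contra! hnone
  have hfree : C.NoBinaryBelow C.gates.length := fun k g _ hg => by simpa using hnone k g hg
  rcases hfree.upToNeg_or_const C.output.isLt with ⟨i, hi⟩ | ⟨c, hc⟩
  · have : Nontrivial (Fin n) := Fin.nontrivial_iff_two_le.2 hn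
    obtain ⟨j, hj⟩ := exists_ne i
    exact not_dependsOn_XORf (s := {i}) hj (hC.dependsOn_of_upToNeg hi)
  · refine not_dependsOn_XORf (Set.notMem_empty (⟨0, by omega⟩ : Fin n)) fun x y _ => ?_
    rw [← hC x, ← hC y, eval_eq_nodeVal, eval_eq_nodeVal, hc, hc]

theorem exists_first_binaryGate
    (hex : ∃ (k : ℕ) (g : Gate n), C.gates[k]? = some g ∧ g.costly = true) :
    ∃ h a b, C.IsBinaryGate h a b ∧ C.NoBinaryBelow h := by
  classical
  obtain ⟨g, hg, hcost⟩ := Nat.find_spec hex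
  obtain ⟨a, b, hab⟩ := exists_isBinaryGate_of_costly hg hcost
  refine ⟨Nat.find hex, a, b, hab, fun k g' hk hg' => ?_⟩
  simpa using fun hcost' => Nat.find_min hex hk ⟨g', hg', hcost'⟩

theorem upToNeg_or_nodeVal_eq {x y : Fin n → Bool} {i : Fin n} (hxy : ∀ k ≠ i, x k = y k)
    (hread : ∀ g, ReadsVar C g i → C.nodeVal x g = C.nodeVal y g) (k : ℕ) :
    UpToNeg C k i ∨ C.nodeVal x k = C.nodeVal y k := by
  induction k using Nat.strong_induction_on with
  | _ k ih =>
  cases hg : C.gates[k]? with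
  | none =>
    have hk : C.gates.length ≤ k := by simpa using hg
    exact .inr (by rw [nodeVal_of_length_le x hk, nodeVal_of_length_le y hk])
  | some g =>
    cases g with
    | inp i' =>
      by_cases hi : i' = i
      · exact .inl (.base (hi ▸ hg))
      · exact .inr (by rw [nodeVal_of_getElem? x hg, nodeVal_of_getElem? y hg]; exact hxy i' hi)
    | const c => exact .inr (by rw [nodeVal_of_getElem? x hg, nodeVal_of_getElem? y hg]; rfl)
    | not a =>
      rcases ih a (C.wf k _ hg a (by simp [Gate.refs])) with hu | he
      · exact .inl (.neg hg hu)
      · exact .inr (by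
          rw [nodeVal_of_getElem? x hg, nodeVal_of_getElem? y hg]; exact congrArg (!·) he)
    | and a b | or a b =>
      refine .inr ?_
      have hab : C.IsBinaryGate k a b := by simp [IsBinaryGate, hg]
      by_cases hr : ReadsVar C k i
      · exact hread k hr
      obtain ⟨ha, hb⟩ := hab.lt
      obtain ⟨op, -, hval⟩ := hab.nodeVal_eq
      rw [hval, hval, (ih a ha).resolve_left fun hu => hr ⟨a, b, hab, .inl hu⟩,
        (ih b hb).resolve_left fun hu => hr ⟨a, b, hab, .inr hu⟩]

theorem exists_ne_readsVar_of_computes_XORf (hC : C.Computes (XORf n)) {h : ℕ} {i j : Fin n}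
    (hj : ReadsVar C h j) (hij : i ≠ j) : ∃ g ≠ h, ReadsVar C g i := by
  by_contra! honly
  obtain ⟨v, c, hforce⟩ := hj.exists_forcing
  let x : Fin n → Bool := fun _ => v
  have hxy : ∀ k ≠ i, x k = Function.update x i (!x i) k := fun k hk =>
    (Function.update_of_ne hk _ _).symm
  have hread : ∀ g, ReadsVar C g i →
      C.nodeVal x g = C.nodeVal (Function.update x i (!x i)) g := fun g hg => by
    obtain rfl : g = h := by_contra fun hne => honly g hne hg
    rw [hforce x rfl, hforce _ (Function.update_of_ne hij.symm _ _)]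
  rcases upToNeg_or_nodeVal_eq hxy hread C.output with hu | he
  · exact not_dependsOn_XORf (s := {i}) hij.symm (hC.dependsOn_of_upToNeg hu)
  · have hflip := XORf_update_not x i
    rw [← hC, ← hC, eval_eq_nodeVal, eval_eq_nodeVal, ← he] at hflip
    exact Bool.not_ne_self _ hflip.symm

end Circuit

/-- Structure at the bottom of an optimal parity circuit: if `n ≥ 2` and
`C` is a minimum-size DeMorgan circuit computing `XOR_n` (whose gate list fixes a
topological order), then the first binary gate `h` in this order has as its two inputs,
up to negations, two distinct variables `x_i` and `x_j` (`i ≠ j`), and each of `x_i`,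
`x_j` is read (possibly through negations) by at least two distinct binary gates. -/
theorem optimal_xor_bottom_structure :
    ∀ n : ℕ, 2 ≤ n → ∀ C : Circuit n, C.Computes (XORf n) →
      (∀ C' : Circuit n, C'.Computes (XORf n) → C.size ≤ C'.size) →
      ∃ (h a b : ℕ) (i j : Fin n),
        (C.gates[h]? = some (.and a b) ∨ C.gates[h]? = some (.or a b)) ∧
        (∀ (h' : ℕ) (g : Gate n), h' < h → C.gates[h']? = some g → g.costly = false) ∧
        UpToNeg C a i ∧ UpToNeg C b j ∧ i ≠ j ∧
        (∃ g₁ g₂ : ℕ, g₁ ≠ g₂ ∧ ReadsVar C g₁ i ∧ ReadsVar C g₂ i) ∧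
        (∃ g₁ g₂ : ℕ, g₁ ≠ g₂ ∧ ReadsVar C g₁ j ∧ ReadsVar C g₂ j) := by
  intro n hn C hC hmin
  obtain ⟨h, a, b, hab, hfree⟩ :=
    Circuit.exists_first_binaryGate (Circuit.exists_costly_of_computes_XORf hn hC)
  obtain ⟨i, j, hai, hbj, hij⟩ :=
    Circuit.IsMinimal.exists_upToNeg_inputs ⟨hC, hmin⟩ hab hfree
  have hhi : ReadsVar C h i := ⟨a, b, hab, .inl hai⟩
  have hhj : ReadsVar C h j := ⟨a, b, hab, .inr hbj⟩
  obtain ⟨gi, hgi, hri⟩ := Circuit.exists_ne_readsVar_of_computes_XORf hC hhj hij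
  obtain ⟨gj, hgj, hrj⟩ := Circuit.exists_ne_readsVar_of_computes_XORf hC hhi hij.symm
  exact ⟨h, a, b, i, j, hab, hfree, hai, hbj, hij,
    ⟨h, gi, hgi.symm, hhi, hri⟩, ⟨h, gj, hgj.symm, hhj, hrj⟩⟩
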